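/- arXiv:2209.11425 — 2 statements merged into one kernel-verified Lean document; each statement's English description precedes it below -/
import Mathlib

section
/- For vectors w, h in ℂ^n and a Hermitian positive definite matrix R, the generalized Rayleigh quotient (wᴴ h hᴴ w)/(wᴴ R w) over nonzero w is maximized at w* = R⁻¹h (up to scaling), with maximum value hᴴ R⁻¹ h. -/
open Matrix ComplexOrder

/-! For the inner product `⟪x, y⟫ = xᴴ R y` one has `wᴴ h = ⟪w, R⁻¹ h⟫`, so Cauchy–Schwarz gives
`|wᴴ h|² ≤ (wᴴ R w) (hᴴ R⁻¹ h)`, with equality at `w = R⁻¹ h` since there `wᴴ R w = wᴴ h = hᴴ R⁻¹ h`. -/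

namespace Matrix

variable {𝕜 ι : Type*} [RCLike 𝕜] [Fintype ι]

noncomputable def rayleighQuotient (R : Matrix ι ι 𝕜) (h w : ι → 𝕜) : ℝ :=
  RCLike.re ((star w ⬝ᵥ h) * (star h ⬝ᵥ w)) / RCLike.re (star w ⬝ᵥ R *ᵥ w)

theorem PosSemidef.norm_star_dotProduct_mulVec_sq_le {M : Matrix ι ι 𝕜} (hM : M.PosSemidef)
    (x y : ι → 𝕜) :
    ‖star x ⬝ᵥ M *ᵥ y‖ ^ 2 ≤
      RCLike.re (star x ⬝ᵥ M *ᵥ x) * RCLike.re (star y ⬝ᵥ M *ᵥ y) := by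
  let := M.toSeminormedAddCommGroup hM
  let := M.toInnerProductSpace hM
  have hinner (a b : ι → 𝕜) : inner 𝕜 a b = star a ⬝ᵥ M *ᵥ b := dotProduct_comm _ _
  have := inner_mul_inner_self_le (𝕜 := 𝕜) x y
  rwa [norm_inner_symm y x, ← sq, hinner, hinner, hinner] at this

theorem re_star_dotProduct_mul_star_dotProduct (v w : ι → 𝕜) :
    RCLike.re ((star v ⬝ᵥ w) * (star w ⬝ᵥ v)) = ‖star v ⬝ᵥ w‖ ^ 2 := by
  rw [star_dotProduct w v, ← starRingEnd_apply (star v ⬝ᵥ w), RCLike.mul_conj]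
  norm_cast

theorem IsHermitian.ofReal_re_star_dotProduct_mulVec_self {M : Matrix ι ι 𝕜}
    (hM : M.IsHermitian) (x : ι → 𝕜) :
    (RCLike.re (star x ⬝ᵥ M *ᵥ x) : 𝕜) = star x ⬝ᵥ M *ᵥ x :=
  RCLike.conj_eq_iff_re.mp (RCLike.conj_eq_iff_im.mpr (hM.im_star_dotProduct_mulVec_self x))

variable [DecidableEq ι] {R : Matrix ι ι 𝕜}

theorem PosDef.mulVec_inv_mulVec (hR : R.PosDef) (h : ι → 𝕜) : R *ᵥ (R⁻¹ *ᵥ h) = h := by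
  rw [mulVec_mulVec, mul_nonsing_inv _ (isUnit_iff_isUnit_det _ |>.1 hR.isUnit), one_mulVec]

theorem PosDef.star_inv_mulVec_dotProduct (hR : R.PosDef) (h : ι → 𝕜) :
    star (R⁻¹ *ᵥ h) ⬝ᵥ h = star h ⬝ᵥ R⁻¹ *ᵥ h := by
  rw [star_dotProduct, ← hR.inv.isHermitian.ofReal_re_star_dotProduct_mulVec_self,
    RCLike.star_def, RCLike.conj_ofReal]

theorem PosDef.norm_star_dotProduct_sq_le (hR : R.PosDef) (h w : ι → 𝕜) :
    ‖star w ⬝ᵥ h‖ ^ 2 ≤ RCLike.re (star w ⬝ᵥ R *ᵥ w) * RCLike.re (star h ⬝ᵥ R⁻¹ *ᵥ h) := by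
  have := hR.posSemidef.norm_star_dotProduct_mulVec_sq_le w (R⁻¹ *ᵥ h)
  rwa [hR.mulVec_inv_mulVec, hR.star_inv_mulVec_dotProduct] at this

theorem PosDef.rayleighQuotient_le (hR : R.PosDef) (h : ι → 𝕜) {w : ι → 𝕜} (hw : w ≠ 0) :
    R.rayleighQuotient h w ≤ RCLike.re (star h ⬝ᵥ R⁻¹ *ᵥ h) := by
  rw [rayleighQuotient, div_le_iff₀' (hR.re_dotProduct_pos hw),
    re_star_dotProduct_mul_star_dotProduct]
  exact hR.norm_star_dotProduct_sq_le h w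

theorem PosDef.rayleighQuotient_inv_mulVec (hR : R.PosDef) (h : ι → 𝕜) :
    R.rayleighQuotient h (R⁻¹ *ᵥ h) = RCLike.re (star h ⬝ᵥ R⁻¹ *ᵥ h) := by
  have hc := hR.inv.isHermitian.ofReal_re_star_dotProduct_mulVec_self h
  rw [rayleighQuotient, hR.mulVec_inv_mulVec, hR.star_inv_mulVec_dotProduct, ← hc,
    ← RCLike.ofReal_mul, RCLike.ofReal_re, RCLike.ofReal_re, mul_self_div_self]

end Matrix

theorem stmt_4_general (n : ℕ) (h : Fin n → ℂ)
    (R : Matrix (Fin n) (Fin n) ℂ) (hR : R.PosDef) :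
    (∀ w : Fin n → ℂ, w ≠ 0 →
      ((star w ⬝ᵥ h) * (star h ⬝ᵥ w)).re / (star w ⬝ᵥ R.mulVec w).re ≤
        (star h ⬝ᵥ R⁻¹.mulVec h).re) ∧
    ((star (R⁻¹.mulVec h) ⬝ᵥ h) * (star h ⬝ᵥ R⁻¹.mulVec h)).re /
        (star (R⁻¹.mulVec h) ⬝ᵥ R.mulVec (R⁻¹.mulVec h)).re =
      (star h ⬝ᵥ R⁻¹.mulVec h).re :=
  ⟨fun _ hw => hR.rayleighQuotient_le h hw, hR.rayleighQuotient_inv_mulVec h⟩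

/-- The generalized Rayleigh quotient `(wᴴ h hᴴ w)/(wᴴ R w)` over nonzero `w` is
maximized at `w* = R⁻¹ h`, with maximum value `hᴴ R⁻¹ h`. -/
theorem stmt_4 (n : ℕ) (h : Fin n → ℂ) (hh : h ≠ 0)
    (R : Matrix (Fin n) (Fin n) ℂ) (hR : R.PosDef) :
    (∀ w : Fin n → ℂ, w ≠ 0 →
      ((star w ⬝ᵥ h) * (star h ⬝ᵥ w)).re / (star w ⬝ᵥ R.mulVec w).re ≤
        (star h ⬝ᵥ R⁻¹.mulVec h).re) ∧
    ((star (R⁻¹.mulVec h) ⬝ᵥ h) * (star h ⬝ᵥ R⁻¹.mulVec h)).re /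
        (star (R⁻¹.mulVec h) ⬝ᵥ R.mulVec (R⁻¹.mulVec h)).re =
      (star h ⬝ᵥ R⁻¹.mulVec h).re :=
  stmt_4_general n h R hR
end

section
/- For N_T ≥ 1 and distortion levels 0 ≤ β < 1, the asymptotic MSE floor F(β_T, β_R) = 1 − N_T/(β_T² + (1+β_R²)N_T) satisfies F(0, β) ≥ F(β, 0) for every β ≥ 0, i.e., receiver distortion of a given level degrades MSE at least as much as the same level of transmitter distortion. -/
/-! With `t = β²`, the claim is `N / ((1 + t) N) ≤ N / (t + N)`: the right denominator is
the smaller one as soon as `t ≤ t N`, i.e. `N ≥ 1`, and for `N = 0` both sides vanish. -/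

lemma div_one_add_mul_le_div_add {n t : ℝ} (hn : 1 ≤ n) (ht : 0 ≤ t) :
    n / ((1 + t) * n) ≤ n / (t + n) := by
  have hden : t + n ≤ (1 + t) * n := by nlinarith
  exact div_le_div_of_nonneg_left (by linarith) (by linarith) hden

lemma natCast_div_one_add_mul_le_div_add (N : ℕ) {t : ℝ} (ht : 0 ≤ t) :
    (N : ℝ) / ((1 + t) * N) ≤ N / (t + N) := by
  rcases N.eq_zero_or_pos with rfl | hN
  · simp
  · exact div_one_add_mul_le_div_add (by exact_mod_cast hN) ht

theorem stmt_10_general (N : ℕ) (β : ℝ) :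
    1 - (N : ℝ) / ((0 : ℝ) ^ 2 + (1 + β ^ 2) * N) ≥
      1 - (N : ℝ) / (β ^ 2 + (1 + (0 : ℝ) ^ 2) * N) := by
  have h := natCast_div_one_add_mul_le_div_add N (sq_nonneg β)
  norm_num only [zero_pow two_ne_zero, zero_add, add_zero, one_mul]
  linarith

/-- Receiver distortion degrades the high-SNR MSE floor at least as much as the same
level of transmitter distortion: `F(0,β) ≥ F(β,0)` where
`F(β_T,β_R) = 1 − N_T/(β_T² + (1+β_R²)N_T)`. -/
theorem stmt_10 (N : ℕ) (hN : 1 ≤ N) (β : ℝ) (hβ0 : 0 ≤ β) (hβ1 : β < 1) :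
    1 - (N : ℝ) / ((0 : ℝ) ^ 2 + (1 + β ^ 2) * N) ≥
      1 - (N : ℝ) / (β ^ 2 + (1 + (0 : ℝ) ^ 2) * N) :=
  stmt_10_general N β
end
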